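/- Let T : ℕ → ℕ be the shortcut Collatz map. For all k, m ∈ ℕ, all i ∈ ℕ with i < 2^k, and all r ∈ ℕ with r ≤ k, we have T^r(2^k·m + i) = 3^{p_r(i)}·2^{k−r}·m + T^r(i), where p_r(i) is the number of indices s with 0 ≤ s < r such that T^s(i) is odd. -/

import Mathlib

/-- The shortcut Collatz map: `T x = x / 2` if `x` is even, `(3 * x + 1) / 2` if `x` is odd. -/
def T : ℕ → ℕ := fun x => if x % 2 = 0 then x / 2 else (3 * x + 1) / 2

/-- `p r i` is the number of indices `s < r` such that `T^[s] i` is odd. -/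
def p (r i : ℕ) : ℕ := ((Finset.range r).filter (fun s => Odd (T^[s] i))).card

/-!
Adding an even number `2 * B` to `j` shifts `T j` by `B` or `3 * B` according to the parity of
`j`, so `r` steps of `T` turn a shift by `2 ^ r * B` of `i` into a shift by `3 ^ p r i * B` of
`T^[r] i`. For `r ≤ k`, write `2 ^ k * m = 2 ^ r * (2 ^ (k - r) * m)`.
-/

lemma T_two_mul_add_of_even {j : ℕ} (hj : Even j) (B : ℕ) : T (2 * B + j) = B + T j := by
  obtain ⟨c, rfl⟩ := hj
  unfold T
  split_ifs <;> omega

lemma T_two_mul_add_of_odd {j : ℕ} (hj : Odd j) (B : ℕ) : T (2 * B + j) = 3 * B + T j := by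
  obtain ⟨c, rfl⟩ := hj
  unfold T
  split_ifs <;> omega

lemma p_succ (r i : ℕ) : p (r + 1) i = p r i + if Odd (T^[r] i) then 1 else 0 := by
  simp only [p, Finset.card_filter, Finset.sum_range_succ]

lemma iterate_T_two_pow_mul_add (r B i : ℕ) :
    T^[r] (2 ^ r * B + i) = 3 ^ p r i * B + T^[r] i := by
  induction r generalizing B with
  | zero => simp [p]
  | succ r ih =>
    have hshift : 2 ^ (r + 1) * B = 2 ^ r * (2 * B) := by ring
    rw [Function.iterate_succ_apply', Function.iterate_succ_apply', hshift, ih,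
      mul_left_comm, p_succ]
    by_cases hj : Odd (T^[r] i)
    · rw [T_two_mul_add_of_odd hj, if_pos hj, pow_succ]
      ring
    · rw [T_two_mul_add_of_even (Nat.not_odd_iff_even.mp hj), if_neg hj, add_zero]

theorem collatz_class_formula_partial_general (k m i : ℕ) (r : ℕ) (hr : r ≤ k) :
    T^[r] (2 ^ k * m + i) = 3 ^ (p r i) * 2 ^ (k - r) * m + T^[r] i := by
  rw [← pow_mul_pow_sub 2 hr, mul_assoc, iterate_T_two_pow_mul_add, mul_assoc]

theorem collatz_class_formula_partial (k m i : ℕ) (hi : i < 2 ^ k) (r : ℕ) (hr : r ≤ k) :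
    T^[r] (2 ^ k * m + i) = 3 ^ (p r i) * 2 ^ (k - r) * m + T^[r] i :=
  collatz_class_formula_partial_general k m i r hr
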